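/- For all nonnegative integers r and s, the quiver Γ^{r+s+4}_{r,s,0} of coloured oriented single and paired diagonals of a regular (r+s+4)-gon is isomorphic as a stable translation quiver to Z A_{r+s+1}/⟨τ^{-(r+s+4)}⟩; this quotient is the Auslander–Reiten quiver of the 2-repetitive cluster category C²_{A_{r+s+1}} = D^b(mod kA_{r+s+1})/(τ^{-1}Σ)², on which (τ^{-1}Σ)² acts as τ^{-(r+s+4)}. In particular, for s = 0 the quiver Γ^{r+4}_{r,0,0} of paired oriented diagonals of a regular (r+4)-gon is isomorphic to Z A_{r+1}/⟨τ^{-(r+4)}⟩ and always lies on a cylinder. -/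

import Mathlib

/-!
Coloured oriented single and paired diagonals in a regular polygon, following
L. Lamberti, "Combinatorial model for the cluster categories of type E".

The vertices of the regular `m`-gon `Π` are labelled by `ZMod m` (clockwise).
A coloured oriented diagonal `[i,j]_c` is encoded by the structure `Diag`;
the colour `P` encodes a *paired* diagonal `[i,j]_P = {[i,j]_R, [j,i]_B}`.
-/

inductive Colour : Type
  | R : Colour
  | B : Colour
  | P : Colour
deriving DecidableEq

/-- A coloured oriented (single or paired) diagonal `[i,j]_c` of the regular
`m`-gon (for `m = 0` we interpret `ZMod 0 = ℤ` as the infinite-sided polygon). -/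
structure Diag (m : ℕ) where
  i : ZMod m
  j : ZMod m
  c : Colour
deriving DecidableEq

/-- The simultaneous change of colour and orientation:
`ρ([i,j]_R) = [j,i]_B`, `ρ([i,j]_B) = [j,i]_R`, `ρ([i,j]_P) = [i,j]_P`. -/
def rho {m : ℕ} : Diag m → Diag m
  | ⟨i, j, Colour.R⟩ => ⟨j, i, Colour.B⟩
  | ⟨i, j, Colour.B⟩ => ⟨j, i, Colour.R⟩
  | ⟨i, j, Colour.P⟩ => ⟨i, j, Colour.P⟩

/-- The anticlockwise rotation `[i,j]_c ↦ [i-1,j-1]_c`. -/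
def shiftD {m : ℕ} (d : Diag m) : Diag m := ⟨d.i - 1, d.j - 1, d.c⟩

/-- The slice of `Π_{r,s,t}` based at the vertex `i` of `Π`:
the paired diagonals `[i,i+2]_P, …, [i,i+r+2]_P`, the red single diagonals
`[i,i+r+3]_R, …, [i,i+r+s+2]_R` and the blue single diagonals
`[i+r+3,i]_B, …, [i+r+t+2,i]_B`. -/
def PiSetAt (r s t : ℕ) {m : ℕ} (i : ZMod m) : Set (Diag m) :=
  {d | (∃ k : ℕ, 2 ≤ k ∧ k ≤ r + 2 ∧ d = ⟨i, i + (k : ZMod m), Colour.P⟩) ∨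
       (∃ k : ℕ, r + 3 ≤ k ∧ k ≤ r + s + 2 ∧ d = ⟨i, i + (k : ZMod m), Colour.R⟩) ∨
       (∃ k : ℕ, r + 3 ≤ k ∧ k ≤ r + t + 2 ∧ d = ⟨i + (k : ZMod m), i, Colour.B⟩)}

/-- The set `Π_{r,s,t}` of coloured oriented single and paired diagonals of the
regular `m`-gon associated to the tree `T_{r,s,t}`. -/
def PiSet (r s t m : ℕ) : Set (Diag m) := ⋃ i : ZMod m, PiSetAt r s t i

open Classical in
/-- The translation `τ` on coloured oriented diagonals: the anticlockwise
rotation `[i,j]_c ↦ [i-1,j-1]_c`, composed with `ρ^{m}` on the first slice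
`Π_{r,s,t}|_1` when the tree is symmetric (`s = t`). -/
noncomputable def tauD (r s t : ℕ) {m : ℕ} (d : Diag m) : Diag m :=
  if s = t ∧ d ∈ PiSetAt r s t (1 : ZMod m) then rho^[m] (shiftD d) else shiftD d

/-- Minimal clockwise rotations (before the colour adjustment at the seam):
`[k,l]_c → [k,l+1]_c`, `[k,l]_c → [k+1,l]_c`, together with
`[k,k+r+2]_P → [k,k+r+3]_R`, `[k,k+r+2]_P → [k+r+3,k]_B`,
`[k,k+r+3]_R → [k+1,k+r+3]_P` and `[k+r+3,k]_B → [k+1,k+r+3]_P`. -/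
def Rot (r : ℕ) {m : ℕ} (a b : Diag m) : Prop :=
  b = ⟨a.i, a.j + 1, a.c⟩ ∨ b = ⟨a.i + 1, a.j, a.c⟩ ∨
  (∃ k : ZMod m, a = ⟨k, k + ((r : ZMod m) + 2), Colour.P⟩ ∧
    (b = ⟨k, k + ((r : ZMod m) + 3), Colour.R⟩ ∨
     b = ⟨k + ((r : ZMod m) + 3), k, Colour.B⟩)) ∨
  (∃ k : ZMod m,
    (a = ⟨k, k + ((r : ZMod m) + 3), Colour.R⟩ ∨
     a = ⟨k + ((r : ZMod m) + 3), k, Colour.B⟩) ∧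
    b = ⟨k + 1, k + ((r : ZMod m) + 3), Colour.P⟩)

/-- In the symmetric case `s = t` with an odd-sided polygon, the arrows whose
source lies in `τ(Π_{r,t,t}|_1)` and whose (unadjusted) target lies in the
first slice `Π_{r,t,t}|_1` additionally change colour and orientation. -/
def SeamTwist (r s t m : ℕ) (a b₀ : Diag m) : Prop :=
  s = t ∧ Odd m ∧ a ∈ (tauD r s t) '' (PiSetAt r s t (1 : ZMod m)) ∧
    b₀ ∈ PiSetAt r s t (1 : ZMod m)

/-- The arrows of the quiver `Γ^{m}_{r,s,t}`: minimal clockwise rotations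
between elements of `Π_{r,s,t}`, adjusted by `ρ` at the seam. -/
def ArrowD (r s t m : ℕ) (a b : Diag m) : Prop :=
  a ∈ PiSet r s t m ∧ b ∈ PiSet r s t m ∧
    ∃ b₀, Rot r a b₀ ∧
      ((SeamTwist r s t m a b₀ ∧ b = rho b₀) ∨ (¬ SeamTwist r s t m a b₀ ∧ b = b₀))

/-- The vertices of the tree `T_{r,s,t}`: a central vertex together with three
legs having `r`, `s`, `t` vertices respectively. -/
inductive TVert (r s t : ℕ) : Type
  | center : TVert r s t
  | legA : Fin r → TVert r s t
  | legB : Fin s → TVert r s t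
  | legC : Fin t → TVert r s t
deriving DecidableEq

/-- An orientation of the tree `T_{r,s,t}`: the `A`-leg points towards the
centre, the `B`- and `C`-legs point away from it. -/
def TArrow {r s t : ℕ} (x y : TVert r s t) : Prop :=
  (∃ k l : Fin r, (l : ℕ) + 1 = (k : ℕ) ∧ x = TVert.legA k ∧ y = TVert.legA l) ∨
  (∃ k : Fin r, (k : ℕ) = 0 ∧ x = TVert.legA k ∧ y = TVert.center) ∨
  (∃ k : Fin s, (k : ℕ) = 0 ∧ x = TVert.center ∧ y = TVert.legB k) ∨
  (∃ k l : Fin s, (k : ℕ) + 1 = (l : ℕ) ∧ x = TVert.legB k ∧ y = TVert.legB l) ∨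
  (∃ k : Fin t, (k : ℕ) = 0 ∧ x = TVert.center ∧ y = TVert.legC k) ∨
  (∃ k l : Fin t, (k : ℕ) + 1 = (l : ℕ) ∧ x = TVert.legC k ∧ y = TVert.legC l)

/-- The order-two graph automorphism of a symmetric tree `T_{r,t,t}`,
exchanging its two legs of length `t`. -/
def treeRho {r t : ℕ} : TVert r t t → TVert r t t
  | TVert.center => TVert.center
  | TVert.legA k => TVert.legA k
  | TVert.legB k => TVert.legC k
  | TVert.legC k => TVert.legB k

/-- `treeRho` as a permutation. -/
def treeRhoPerm (r t : ℕ) : Equiv.Perm (TVert r t t) :=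
  Function.Involutive.toPerm treeRho (by intro x; cases x <;> rfl)

/-- The translation of the repetitive quiver `ℤQ`: `τ(m,i) = (m-1,i)`. -/
def ZTau {V : Type} (x : ℤ × V) : ℤ × V := (x.1 - 1, x.2)

/-- The arrows of the repetitive quiver `ℤQ` of a quiver with arrow relation
`A`: for each arrow `i → j` of `Q` there are arrows `(m,i) → (m,j)` and
`(m,j) → (m+1,i)`. -/
def ZArrow {V : Type} (A : V → V → Prop) (x y : ℤ × V) : Prop :=
  (y.1 = x.1 ∧ A x.2 y.2) ∨ (y.1 = x.1 + 1 ∧ A y.2 x.2)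

/-- The automorphism `τ^{-m} σ` of `ℤQ` given by shifting `m` steps to the
right and applying the graph automorphism `σ` of `Q`. -/
def shiftPerm {V : Type} (m : ℕ) (σ : Equiv.Perm V) : Equiv.Perm (ℤ × V) :=
  (Equiv.addRight (m : ℤ)).prodCongr σ

/-- `φ` exhibits the quiver `Γ^{m}_{r,s,t}` (with vertex set `PiSet r s t m`,
arrow relation `ArrowD` and translation `tauD`) as the quotient of the
repetitive quiver `ℤQ` (with arrow relation `ZArrow A` and translation `ZTau`)
by the cyclic group generated by the automorphism `g`, as stable translation
quivers: `φ` is surjective onto the vertex set, its fibres are exactly the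
`g`-orbits, it commutes with the translations, and the arrows of
`Γ^{m}_{r,s,t}` correspond exactly to the `g`-orbits of arrows of `ℤQ`. -/
def IsQuotientIso (r s t m : ℕ) {V : Type} (A : V → V → Prop)
    (g : Equiv.Perm (ℤ × V)) (φ : ℤ × V → Diag m) : Prop :=
  (∀ x, φ x ∈ PiSet r s t m) ∧
  (∀ d ∈ PiSet r s t m, ∃ x, φ x = d) ∧
  (∀ x y, φ x = φ y ↔ ∃ k : ℤ, (g ^ k) x = y) ∧
  (∀ x, φ (ZTau x) = tauD r s t (φ x)) ∧
  (∀ x y, ArrowD r s t m (φ x) (φ y) ↔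
    ∃ y', (∃ k : ℤ, (g ^ k) y = y') ∧ ZArrow A x y')


/-!
The vertex `(p, v)` of `ℤA_{r+s+1}`, with `v` at distance `l` from the end of the path, goes
to the diagonal of length `l + 2` in the slice based at `p - l` (paired for `l ≤ r`, red
otherwise). Arrows of `ℤA` change (base, length) by `(0, +1)` or `(+1, -1)`, exactly as the
minimal clockwise rotations do, and `τ` lowers the base by one on both sides. All lengths
occurring are smaller than `r + s + 4`, so a diagonal remembers its length and its base modulo
`r + s + 4`: the fibres are the orbits of `τ^{-(r+s+4)}`. For `t = 0` the seam corrections by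
`ρ` only touch paired diagonals, which `ρ` fixes.
-/

theorem ZMod.natCast_eq_natCast_iff_of_lt {m a b : ℕ} (ha : a < m) (hb : b < m) :
    (a : ZMod m) = b ↔ a = b :=
  ⟨fun h => ((ZMod.natCast_eq_natCast_iff a b m).1 h).eq_of_lt_of_lt ha hb, congrArg _⟩

theorem exists_add_mul_eq_iff_intCast_eq {m : ℕ} {a b : ℤ} :
    (∃ k : ℤ, a + k * m = b) ↔ (a : ZMod m) = b := by
  rw [ZMod.intCast_eq_intCast_iff_dvd_sub]
  exact ⟨fun ⟨k, hk⟩ => ⟨k, by rw [← hk]; ring⟩, fun ⟨k, hk⟩ => ⟨k, by linarith⟩⟩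

section ShiftPerm

variable {V : Type} (m : ℕ)

theorem shiftPerm_one_zpow_apply (k : ℤ) (x : ℤ × V) :
    (shiftPerm m (1 : Equiv.Perm V) ^ k) x = (x.1 + k * m, x.2) := by
  induction k using Int.induction_on generalizing x with
  | zero => simp
  | succ k ih =>
    rw [zpow_add_one, Equiv.Perm.mul_apply, ih]
    exact Prod.ext (show x.1 + m + k * m = x.1 + (k + 1) * m by ring) rfl
  | pred k ih =>
    rw [zpow_sub_one, Equiv.Perm.mul_apply, ih]
    exact Prod.ext (show x.1 - m + -k * m = x.1 + (-k - 1) * m by ring) rfl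

theorem exists_shiftPerm_one_zpow_eq_iff (x y : ℤ × V) :
    (∃ k : ℤ, (shiftPerm m (1 : Equiv.Perm V) ^ k) x = y) ↔
      (x.1 : ZMod m) = y.1 ∧ x.2 = y.2 := by
  simp only [shiftPerm_one_zpow_apply, Prod.ext_iff, exists_and_right,
    exists_add_mul_eq_iff_intCast_eq]

theorem exists_zArrow_of_shiftPerm_orbit_iff (A : V → V → Prop) (x y : ℤ × V) :
    (∃ y', (∃ k : ℤ, (shiftPerm m (1 : Equiv.Perm V) ^ k) y = y') ∧ ZArrow A x y') ↔
      ((y.1 : ZMod m) = x.1 ∧ A x.2 y.2) ∨ ((y.1 : ZMod m) = x.1 + 1 ∧ A y.2 x.2) := by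
  simp only [exists_exists_eq_and, shiftPerm_one_zpow_apply, ZArrow, exists_or,
    exists_and_right, exists_add_mul_eq_iff_intCast_eq, Int.cast_add, Int.cast_one]

end ShiftPerm

theorem rho_eq_self_of_c_eq_P {m : ℕ} {d : Diag m} (h : d.c = Colour.P) : rho d = d := by
  obtain ⟨i, j, c⟩ := d
  subst h
  rfl

theorem c_eq_P_of_mem_piSetAt_zero_zero {r m : ℕ} {i : ZMod m} {d : Diag m}
    (hd : d ∈ PiSetAt r 0 0 i) : d.c = Colour.P := by
  rcases hd with ⟨k, -, -, rfl⟩ | ⟨k, hk, hk', -⟩ | ⟨k, hk, hk', -⟩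
  · rfl
  all_goals omega

theorem tauD_zero (r s : ℕ) {m : ℕ} (d : Diag m) : tauD r s 0 d = shiftD d := by
  unfold tauD
  split_ifs with h
  · obtain ⟨rfl, hd⟩ := h
    have hP : d.c = Colour.P := c_eq_P_of_mem_piSetAt_zero_zero hd
    exact Function.iterate_fixed (rho_eq_self_of_c_eq_P (d := shiftD d) hP) m
  · rfl

theorem arrowD_zero_iff (r s m : ℕ) (a b : Diag m) :
    ArrowD r s 0 m a b ↔ a ∈ PiSet r s 0 m ∧ b ∈ PiSet r s 0 m ∧ Rot r a b := by
  have twist_fixed : ∀ b₀, SeamTwist r s 0 m a b₀ → rho b₀ = b₀ := by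
    rintro b₀ ⟨rfl, -, -, hb₀⟩
    exact rho_eq_self_of_c_eq_P (c_eq_P_of_mem_piSetAt_zero_zero hb₀)
  refine and_congr_right' (and_congr_right' ⟨?_, fun h => ⟨b, h, ?_⟩⟩)
  · rintro ⟨b₀, hrot, ⟨htwist, rfl⟩ | ⟨-, rfl⟩⟩
    · rwa [twist_fixed b₀ htwist]
    · exact hrot
  · by_cases htwist : SeamTwist r s 0 m a b
    · exact Or.inl ⟨htwist, (twist_fixed b htwist).symm⟩
    · exact Or.inr ⟨htwist, rfl⟩

theorem Rot.base_length {r m : ℕ} {d e : Diag m} (h : Rot r d e) (hd : d.c ≠ Colour.B)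
    (he : e.c ≠ Colour.B) :
    (e.i = d.i ∧ e.j - e.i = d.j - d.i + 1) ∨ (e.i = d.i + 1 ∧ e.j - e.i + 1 = d.j - d.i) := by
  rcases h with rfl | rfl | ⟨k, rfl, rfl | rfl⟩ | ⟨k, rfl | rfl, rfl⟩
  · exact Or.inl ⟨rfl, by ring⟩
  · exact Or.inr ⟨rfl, by ring⟩
  · exact Or.inl ⟨rfl, by ring⟩
  · exact absurd rfl he
  · exact Or.inr ⟨rfl, by ring⟩
  · exact absurd rfl hd

namespace TVert

def levelEquiv (n : ℕ) : TVert n 0 0 ≃ Fin (n + 1) where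
  toFun
    | center => 0
    | legA k => k.succ
    | legB k => k.elim0
    | legC k => k.elim0
  invFun := Fin.cases center legA
  left_inv
    | center => rfl
    | legA _ => rfl
    | legB k => k.elim0
    | legC k => k.elim0
  right_inv := Fin.cases rfl fun _ => rfl

def level {n : ℕ} (v : TVert n 0 0) : ℕ := levelEquiv n v

variable {n : ℕ}

theorem level_le (v : TVert n 0 0) : v.level ≤ n :=
  Nat.lt_succ_iff.mp (levelEquiv n v).isLt

theorem level_inj {v w : TVert n 0 0} : v.level = w.level ↔ v = w := by
  rw [level, level, ← Fin.ext_iff, (levelEquiv n).apply_eq_iff_eq]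

theorem level_symm_levelEquiv (l : ℕ) (hl : l ≤ n) :
    ((levelEquiv n).symm ⟨l, Nat.lt_succ_of_le hl⟩).level = l := by
  rw [level, Equiv.apply_symm_apply]

theorem tArrow_iff (v w : TVert n 0 0) : TArrow v w ↔ w.level + 1 = v.level := by
  cases v with
  | legB k => exact k.elim0
  | legC k => exact k.elim0
  | center => cases w <;> simp [TArrow, level, levelEquiv]
  | legA k =>
    cases w with
    | legB l => exact l.elim0
    | legC l => exact l.elim0
    | center => simp [TArrow, level, levelEquiv]
    | legA l => simp [TArrow, level, levelEquiv]

end TVert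

section SliceDiag

variable (r : ℕ) {m : ℕ}

def sliceDiag (i : ZMod m) (l : ℕ) : Diag m :=
  ⟨i, i + ((l + 2 : ℕ) : ZMod m), if l ≤ r then Colour.P else Colour.R⟩

theorem sliceDiag_c_ne_B (i : ZMod m) (l : ℕ) : (sliceDiag r i l).c ≠ Colour.B := by
  unfold sliceDiag
  split_ifs <;> simp

theorem mem_piSetAt_zero_iff (s : ℕ) {i : ZMod m} {d : Diag m} :
    d ∈ PiSetAt r s 0 i ↔ ∃ l ≤ r + s, d = sliceDiag r i l := by
  constructor
  · rintro (⟨k, hk, hk', rfl⟩ | ⟨k, hk, hk', rfl⟩ | ⟨k, hk, hk', -⟩)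
    · obtain ⟨l, rfl⟩ : ∃ l, k = l + 2 := ⟨k - 2, by omega⟩
      exact ⟨l, by omega, by rw [sliceDiag, if_pos (by omega)]⟩
    · obtain ⟨l, rfl⟩ : ∃ l, k = l + 2 := ⟨k - 2, by omega⟩
      exact ⟨l, by omega, by rw [sliceDiag, if_neg (by omega)]⟩
    · omega
  · rintro ⟨l, hl, rfl⟩
    unfold sliceDiag
    split_ifs with hlr
    · exact Or.inl ⟨l + 2, by omega, by omega, rfl⟩
    · exact Or.inr (Or.inl ⟨l + 2, by omega, by omega, rfl⟩)

theorem sliceDiag_inj {i i' : ZMod m} {l l' : ℕ} (hl : l + 2 < m) (hl' : l' + 2 < m) :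
    sliceDiag r i l = sliceDiag r i' l' ↔ i = i' ∧ l = l' := by
  constructor
  · intro h
    simp only [sliceDiag, Diag.mk.injEq] at h
    obtain ⟨rfl, hj, -⟩ := h
    refine ⟨rfl, ?_⟩
    have := (ZMod.natCast_eq_natCast_iff_of_lt hl hl').1 (add_left_cancel hj)
    omega
  · rintro ⟨rfl, rfl⟩
    rfl

theorem shiftD_sliceDiag (i : ZMod m) (l : ℕ) :
    shiftD (sliceDiag r i l) = sliceDiag r (i - 1) l := by
  simp only [shiftD, sliceDiag, Diag.mk.injEq, true_and, and_true]
  ring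

theorem rot_sliceDiag_lengthen (i : ZMod m) (l : ℕ) :
    Rot r (sliceDiag r i l) (sliceDiag r i (l + 1)) := by
  by_cases hl : l = r
  · subst hl
    refine Or.inr (Or.inr (Or.inl ⟨i, ?_, Or.inl ?_⟩)) <;>
      simp only [sliceDiag, le_refl, if_true, Nat.not_succ_le_self, if_false] <;> push_cast <;>
      ring_nf
  · refine Or.inl ?_
    simp only [sliceDiag, Diag.mk.injEq, true_and]
    refine ⟨by push_cast; ring, ?_⟩
    split_ifs <;> first | rfl | omega

theorem rot_sliceDiag_shorten (i : ZMod m) (l : ℕ) :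
    Rot r (sliceDiag r i (l + 1)) (sliceDiag r (i + 1) l) := by
  by_cases hl : l = r
  · subst hl
    refine Or.inr (Or.inr (Or.inr ⟨i, Or.inl ?_, ?_⟩)) <;>
      simp only [sliceDiag, le_refl, if_true, Nat.not_succ_le_self, if_false] <;> push_cast <;>
      ring_nf
  · refine Or.inr (Or.inl ?_)
    simp only [sliceDiag, Diag.mk.injEq, true_and]
    refine ⟨by push_cast; ring, ?_⟩
    split_ifs <;> first | rfl | omega

theorem rot_sliceDiag_iff {i i' : ZMod m} {l l' : ℕ} (hl : l + 3 < m) (hl' : l' + 3 < m) :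
    Rot r (sliceDiag r i l) (sliceDiag r i' l') ↔
      (i' = i ∧ l' = l + 1) ∨ (i' = i + 1 ∧ l = l' + 1) := by
  constructor
  · intro h
    rcases h.base_length (sliceDiag_c_ne_B r i l) (sliceDiag_c_ne_B r i' l') with
      ⟨hi, hlen⟩ | ⟨hi, hlen⟩ <;> simp only [sliceDiag, add_sub_cancel_left] at hi hlen
    · refine Or.inl ⟨hi, ?_⟩
      have := (ZMod.natCast_eq_natCast_iff_of_lt (a := l' + 2) (b := l + 3) (by omega) hl).1
        (by rw [hlen]; push_cast; ring)
      omega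
    · refine Or.inr ⟨hi, ?_⟩
      have := (ZMod.natCast_eq_natCast_iff_of_lt (a := l' + 3) (b := l + 2) hl' (by omega)).1
        (by rw [← hlen]; push_cast; ring)
      omega
  · rintro (⟨rfl, rfl⟩ | ⟨rfl, rfl⟩)
    · exact rot_sliceDiag_lengthen r i' l
    · exact rot_sliceDiag_shorten r i l'

end SliceDiag

section ZADiag

variable (r s : ℕ)

def zaDiag (x : ℤ × TVert (r + s) 0 0) : Diag (r + s + 4) :=
  sliceDiag r ((x.1 - x.2.level : ℤ) : ZMod (r + s + 4)) x.2.level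

theorem zaDiag_mem (x : ℤ × TVert (r + s) 0 0) : zaDiag r s x ∈ PiSet r s 0 (r + s + 4) :=
  Set.mem_iUnion.2 ⟨_, (mem_piSetAt_zero_iff r s).2 ⟨_, x.2.level_le, rfl⟩⟩

theorem exists_zaDiag_eq_of_mem (d : Diag (r + s + 4)) (hd : d ∈ PiSet r s 0 (r + s + 4)) :
    ∃ x, zaDiag r s x = d := by
  obtain ⟨i, hd⟩ := Set.mem_iUnion.1 hd
  obtain ⟨l, hl, rfl⟩ := (mem_piSetAt_zero_iff r s).1 hd
  obtain ⟨p, rfl⟩ := ZMod.intCast_surjective i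
  refine ⟨(p + l, (TVert.levelEquiv (r + s)).symm ⟨l, Nat.lt_succ_of_le hl⟩), ?_⟩
  rw [zaDiag, TVert.level_symm_levelEquiv l hl, add_sub_cancel_right]

theorem zaDiag_eq_iff (x y : ℤ × TVert (r + s) 0 0) :
    zaDiag r s x = zaDiag r s y ↔
      ∃ k : ℤ, (shiftPerm (r + s + 4) (1 : Equiv.Perm (TVert (r + s) 0 0)) ^ k) x = y := by
  have hx := x.2.level_le
  have hy := y.2.level_le
  rw [exists_shiftPerm_one_zpow_eq_iff, zaDiag, zaDiag, sliceDiag_inj r (by omega) (by omega),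
    ← TVert.level_inj]
  constructor
  · rintro ⟨h, hl⟩
    rw [hl] at h
    push_cast at h
    exact ⟨sub_left_inj.1 h, hl⟩
  · rintro ⟨h, hl⟩
    rw [hl]
    push_cast
    exact ⟨by rw [h], rfl⟩

theorem zaDiag_zTau (x : ℤ × TVert (r + s) 0 0) :
    zaDiag r s (ZTau x) = tauD r s 0 (zaDiag r s x) := by
  rw [tauD_zero, zaDiag, zaDiag, shiftD_sliceDiag]
  simp only [ZTau]
  push_cast
  ring_nf

theorem rot_zaDiag_iff (x y : ℤ × TVert (r + s) 0 0) :
    Rot r (zaDiag r s x) (zaDiag r s y) ↔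
      ((y.1 : ZMod (r + s + 4)) = x.1 ∧ TArrow x.2 y.2) ∨
        ((y.1 : ZMod (r + s + 4)) = x.1 + 1 ∧ TArrow y.2 x.2) := by
  have hx := x.2.level_le
  have hy := y.2.level_le
  rw [zaDiag, zaDiag, rot_sliceDiag_iff r (by omega) (by omega), TVert.tArrow_iff,
    TVert.tArrow_iff, or_comm]
  generalize x.2.level = l, y.2.level = l'
  push_cast
  constructor
  · rintro (⟨h, rfl⟩ | ⟨h, rfl⟩)
    · exact Or.inl ⟨by push_cast at h; linear_combination h, rfl⟩
    · exact Or.inr ⟨by push_cast at h; linear_combination h, rfl⟩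
  · rintro (⟨h, rfl⟩ | ⟨h, rfl⟩)
    · exact Or.inl ⟨by push_cast; linear_combination h, rfl⟩
    · exact Or.inr ⟨by push_cast; linear_combination h, rfl⟩

theorem isQuotientIso_zaDiag :
    IsQuotientIso r s 0 (r + s + 4) TArrow
      (shiftPerm (r + s + 4) (1 : Equiv.Perm (TVert (r + s) 0 0))) (zaDiag r s) := by
  refine ⟨zaDiag_mem r s, exists_zaDiag_eq_of_mem r s, zaDiag_eq_iff r s, zaDiag_zTau r s,
    fun x y => ?_⟩
  rw [arrowD_zero_iff, rot_zaDiag_iff, exists_zArrow_of_shiftPerm_orbit_iff]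
  simp only [zaDiag_mem, true_and]

end ZADiag

/-- Corollary 4.3, type `A`. For all nonnegative integers
`r` and `s`, the quiver `Γ^{r+s+4}_{r,s,0}` of coloured oriented single and
paired diagonals of a regular `(r+s+4)`-gon is isomorphic, as a stable
translation quiver, to `ℤ A_{r+s+1} / ⟨τ^{-(r+s+4)}⟩`, where
`A_{r+s+1} = T_{r+s,0,0}` is the path with `r+s+1` vertices.  (This quotient
is the AR-quiver of the 2-repetitive cluster category
`C²_{A_{r+s+1}} = D^b(mod k A_{r+s+1})/(τ^{-1}Σ)²`, on which `(τ^{-1}Σ)²` acts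
as `τ^{-(r+s+4)}`.)  In particular, for `s = 0` the quiver `Γ^{r+4}_{r,0,0}`
of paired oriented diagonals of a regular `(r+4)`-gon is isomorphic to
`ℤ A_{r+1} / ⟨τ^{-(r+4)}⟩` (an untwisted quotient: it always lies on a
cylinder). -/
theorem gamma_iso_ZA_quotient (r s : ℕ) :
    (∃ φ : ℤ × TVert (r + s) 0 0 → Diag (r + s + 4),
      IsQuotientIso r s 0 (r + s + 4) TArrow
        (shiftPerm (r + s + 4) (1 : Equiv.Perm (TVert (r + s) 0 0))) φ) ∧
    (∃ φ : ℤ × TVert r 0 0 → Diag (r + 4),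
      IsQuotientIso r 0 0 (r + 4) TArrow
        (shiftPerm (r + 4) (1 : Equiv.Perm (TVert r 0 0))) φ) :=
  ⟨⟨zaDiag r s, isQuotientIso_zaDiag r s⟩, ⟨zaDiag r 0, isQuotientIso_zaDiag r 0⟩⟩
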